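/- Division lemma: let h ∈ ℂ[[x,y]] be quasi-homogeneous of degree δ with isolated singularity, X₀ = δ^{-1}(h_y∂_x − h_x∂_y), and J₀ = (h_x, h_y) the Jacobian ideal. Then for every f ∈ J₀ there exist formal power series a and b such that f = a·h + X₀(b). -/

import Mathlib

set_option maxHeartbeats 1000000
set_option synthInstance.maxHeartbeats 1000000
noncomputable section

/-- The ring of formal power series in two variables over ℂ. -/
abbrev A2 := MvPowerSeries (Fin 2) ℂ

/-- Coefficient-wise partial derivative of a formal power series. -/
def pd (i : Fin 2) (f : A2) : A2 :=
  fun m => (((m i : ℕ) + 1 : ℕ) : ℂ) * MvPowerSeries.coeff (m + Finsupp.single i 1) f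

/-- The weighted radial derivation `R = p₁ x ∂_x + p₂ y ∂_y` on formal power series. -/
def Rder (p₁ p₂ : ℕ) (f : A2) : A2 :=
  (p₁ : ℂ) • (MvPowerSeries.X 0 * pd 0 f) + (p₂ : ℂ) • (MvPowerSeries.X 1 * pd 1 f)

/-- The normalized Hamiltonian derivation `X₀ = δ⁻¹ (h_y ∂_x − h_x ∂_y)` associated to `h`. -/
def ham (δ : ℕ) (h : A2) (f : A2) : A2 :=
  ((δ : ℂ))⁻¹ • (pd 1 h * pd 0 f - pd 0 h * pd 1 f)

/-- Substitution of a series `h` (with zero constant term) into a one-variable formal power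
series `g`, i.e. `g(h) = Σₖ gₖ hᵏ`: only finitely many `k` contribute to each coefficient. -/
def substPS (h : A2) (g : PowerSeries ℂ) : A2 :=
  fun m => ∑ k ∈ Finset.range ((m.sum fun _ e => e) + 1),
    PowerSeries.coeff k g * MvPowerSeries.coeff m (h ^ k)

/-!
Write `f = u h_x + v h_y`. Euler's relation `R(h) = δ h` shows that any `b` with
`b_x = δ v - p₂ y a` and `b_y = p₁ x a - δ u` satisfies `X₀(b) = f - a h`. By the formal Poincaré
lemma such a `b` exists as soon as this pair is closed, which amounts to
`(R + p₁ + p₂) a = δ (u_x + v_y)`; that equation is solved coefficientwise, because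
`R + p₁ + p₂` multiplies the monomial `xⁱ yʲ` by the positive integer `p₁ i + p₂ j + p₁ + p₂`.
-/

namespace MvPowerSeries

open Finsupp

section CommSemiring

variable {σ R : Type*} [CommSemiring R]

lemma coeff_X_mul_pderiv (i : σ) (f : MvPowerSeries σ R) (m : σ →₀ ℕ) :
    coeff m (X i * pderiv R i f) = m i * coeff m f := by
  rw [X_def, coeff_monomial_mul, one_mul]
  split_ifs with hle
  · rw [coeff_pderiv, tsub_add_cancel_of_le hle, tsub_apply, single_eq_same, ← Nat.cast_add_one,
      Nat.sub_add_cancel (single_le_iff.mp hle), mul_comm]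
  · rw [single_le_iff, not_le, Nat.lt_one_iff] at hle
    rw [hle, Nat.cast_zero, zero_mul]

lemma pderiv_X_mul_self (i : σ) (f : MvPowerSeries σ R) :
    pderiv R i (X i * f) = f + X i * pderiv R i f := by
  rw [Derivation.leibniz, pderiv_X_self, smul_eq_mul, smul_eq_mul, mul_one, add_comm]

end CommSemiring

section Field

variable {σ K : Type*} [Field K]

/-- Formal integration in the variable `i`. When `m i = 0` the coefficient is `0`, since
`x / 0 = 0`. -/
def antideriv (i : σ) (f : MvPowerSeries σ K) : MvPowerSeries σ K :=
  fun m => coeff (m - single i 1) f / m i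

lemma coeff_antideriv (i : σ) (f : MvPowerSeries σ K) (m : σ →₀ ℕ) :
    coeff m (antideriv i f) = coeff (m - single i 1) f / m i := rfl

@[simp]
lemma antideriv_zero (i : σ) : antideriv i (0 : MvPowerSeries σ K) = 0 := by
  ext m
  rw [coeff_antideriv, map_zero, map_zero, zero_div]

lemma pderiv_antideriv_self [CharZero K] (i : σ) (f : MvPowerSeries σ K) :
    pderiv K i (antideriv i f) = f := by
  ext m
  rw [coeff_pderiv, coeff_antideriv, add_tsub_cancel_right, Finsupp.add_apply, single_eq_same,
    Nat.cast_add_one]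
  exact div_mul_cancel₀ _ (Nat.cast_add_one_ne_zero _)

lemma pderiv_antideriv_of_ne {i j : σ} (hij : i ≠ j) (f : MvPowerSeries σ K) :
    pderiv K j (antideriv i f) = antideriv i (pderiv K j f) := by
  ext m
  rw [coeff_pderiv, coeff_antideriv, coeff_antideriv, coeff_pderiv, Finsupp.add_apply,
    single_eq_of_ne hij, add_zero]
  rcases eq_or_ne (m i) 0 with hm | hm
  · simp [hm]
  · have hle : single i 1 ≤ m := single_le_iff.mpr (Nat.one_le_iff_ne_zero.mpr hm)
    rw [tsub_apply, single_eq_of_ne hij.symm, Nat.sub_zero, tsub_add_eq_add_tsub hle]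
    ring

lemma exists_pderiv_eq_of_pderiv_comm [CharZero K] {B₀ B₁ : MvPowerSeries (Fin 2) K}
    (hc : pderiv K 1 B₀ = pderiv K 0 B₁) :
    ∃ b, pderiv K 0 b = B₀ ∧ pderiv K 1 b = B₁ := by
  have h₁₀ : pderiv K 1 (antideriv 0 B₀) = antideriv 0 (pderiv K 0 B₁) := by
    rw [pderiv_antideriv_of_ne zero_ne_one, hc]
  refine ⟨antideriv 0 B₀ + antideriv 1 (B₁ - antideriv 0 (pderiv K 0 B₁)), ?_, ?_⟩
  · rw [map_add, pderiv_antideriv_self, pderiv_antideriv_of_ne one_ne_zero, map_sub,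
      pderiv_antideriv_self, sub_self, antideriv_zero, add_zero]
  · rw [map_add, pderiv_antideriv_self, h₁₀, add_sub_cancel]

end Field

end MvPowerSeries

open MvPowerSeries

lemma pd_eq_pderiv (i : Fin 2) : pd i = pderiv ℂ i := by
  funext f
  ext m
  rw [coeff_pderiv, mul_comm, ← Nat.cast_add_one]
  rfl

lemma Rder_eq (p₁ p₂ : ℕ) (f : A2) :
    Rder p₁ p₂ f = (p₁ : ℂ) • (X 0 * pderiv ℂ 0 f) + (p₂ : ℂ) • (X 1 * pderiv ℂ 1 f) := by
  rw [Rder, pd_eq_pderiv, pd_eq_pderiv]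

lemma coeff_Rder (p₁ p₂ : ℕ) (f : A2) (m : Fin 2 →₀ ℕ) :
    coeff m (Rder p₁ p₂ f) = ((p₁ * m 0 + p₂ * m 1 : ℕ) : ℂ) * coeff m f := by
  rw [Rder_eq, map_add, coeff_smul, coeff_smul, coeff_X_mul_pderiv, coeff_X_mul_pderiv]
  push_cast
  ring

lemma exists_Rder_add_smul_eq (p₁ p₂ : ℕ) {c : ℕ} (hc : 0 < c) (g : A2) :
    ∃ a, Rder p₁ p₂ a + (c : ℂ) • a = g := by
  let a : A2 := fun m => coeff m g / ((p₁ * m 0 + p₂ * m 1 + c : ℕ) : ℂ)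
  refine ⟨a, ?_⟩
  ext m
  have hne : ((p₁ * m 0 + p₂ * m 1 + c : ℕ) : ℂ) ≠ 0 := Nat.cast_ne_zero.mpr (by omega)
  rw [map_add, coeff_Rder, coeff_smul, ← add_mul, ← Nat.cast_add]
  exact mul_div_cancel₀ _ hne

lemma pderiv_comm_of_Rder_add_smul_eq {p₁ p₂ : ℕ} {δ : ℂ} {a u v : A2}
    (ha : Rder p₁ p₂ a + ((p₁ + p₂ : ℕ) : ℂ) • a = δ • (pderiv ℂ 0 u + pderiv ℂ 1 v)) :
    pderiv ℂ 1 (δ • v - (p₂ : ℂ) • (X 1 * a)) = pderiv ℂ 0 ((p₁ : ℂ) • (X 0 * a) - δ • u) := by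
  rw [Rder_eq] at ha
  push_cast at ha
  simp only [map_sub, Derivation.map_smul, pderiv_X_mul_self]
  linear_combination (norm := module) -ha

lemma ham_eq_of_pderiv_eq {p₁ p₂ δ : ℕ} (hδ : δ ≠ 0) {h a b u v : A2}
    (hqh : Rder p₁ p₂ h = (δ : ℂ) • h)
    (hb₀ : pderiv ℂ 0 b = (δ : ℂ) • v - (p₂ : ℂ) • (X 1 * a))
    (hb₁ : pderiv ℂ 1 b = (p₁ : ℂ) • (X 0 * a) - (δ : ℂ) • u) :
    ham δ h b = u * pd 0 h + v * pd 1 h - a * h := by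
  rw [ham, inv_smul_eq_iff₀ (Nat.cast_ne_zero.mpr hδ), pd_eq_pderiv, pd_eq_pderiv, hb₀, hb₁]
  rw [Rder_eq] at hqh
  simp only [Algebra.smul_def] at hqh ⊢
  linear_combination (-a) * hqh

theorem stmt12_general (p₁ p₂ δ : ℕ) (hp₁ : 0 < p₁) (hδ : 0 < δ) (h : A2)
    (hqh : Rder p₁ p₂ h = (δ : ℂ) • h) :
    ∀ f ∈ Ideal.span {pd 0 h, pd 1 h}, ∃ a b : A2, f = a * h + ham δ h b := by
  intro f hf
  obtain ⟨u, v, rfl⟩ := Ideal.mem_span_pair.mp hf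
  obtain ⟨a, ha⟩ := exists_Rder_add_smul_eq p₁ p₂ (Nat.add_pos_left hp₁ p₂)
    ((δ : ℂ) • (pderiv ℂ 0 u + pderiv ℂ 1 v))
  obtain ⟨b, hb₀, hb₁⟩ := exists_pderiv_eq_of_pderiv_comm (pderiv_comm_of_Rder_add_smul_eq ha)
  refine ⟨a, b, ?_⟩
  rw [ham_eq_of_pderiv_eq hδ.ne' hqh hb₀ hb₁]
  ring

/-- Division lemma: if `h` is quasi-homogeneous of degree `δ > 0` with isolated singularity,
then every element of the Jacobian ideal `J₀ = (h_x, h_y)` can be written `a·h + X₀(b)`. -/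
theorem stmt12 (p₁ p₂ δ : ℕ) (hp₁ : 0 < p₁) (hp₂ : 0 < p₂) (hδ : 0 < δ) (h : A2)
    (hqh : Rder p₁ p₂ h = (δ : ℂ) • h)
    (hiso : FiniteDimensional ℂ (A2 ⧸ Ideal.span {pd 0 h, pd 1 h})) :
    ∀ f ∈ Ideal.span {pd 0 h, pd 1 h}, ∃ a b : A2, f = a * h + ham δ h b :=
  stmt12_general p₁ p₂ δ hp₁ hδ h hqh
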